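/- Let E/F be an extension, V an E-vector space with a pairing between V_i := V (an E-space) and V_{-i} its h-dual as in the split setting. If (e_1,…,e_n) is an E-basis of V_i splitting Λ_i, with Λ_i(r) = ⊕_k 𝔭_{E}^{⌈r+λ_k⌉}e_k, and (e_{-1},…,e_{-n}) is the dual basis of V_{-i} (h(e_{-k}, e_l) = δ_{kl}), then the dual lattice function is given by Λ_i^{♯_i}(r) = ⊕_k 𝔭_{E}^{⌈r−λ_k⌉}e_{-k}. Consequently the duality map Λ_i ↦ Λ_i^{♯_i} is affine: (tΛ_i + (1−t)M_i)^{♯_i} = tΛ_i^{♯_i} + (1−t)M_i^{♯_i} for t ∈ [0,1]. -/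

import Mathlib

/-- The lattice function split by a basis `e` with exponents `c`. -/
def splitLat {E V : Type*} [Field E] [AddCommGroup V] [Module E V]
    (v : E → EReal) {n : ℕ} (e : Fin n → V) (c : Fin n → ℝ) : ℝ → Set V :=
  fun r => {x : V | ∃ a : Fin n → E,
    (∀ k, ((⌈r + c k⌉ : ℝ) : EReal) ≤ v (a k)) ∧ x = ∑ k, a k • e k}

/-- Formula (7.2) and its consequence: if `Λ(r) = ⊕_k 𝔭^{⌈r+λ_k⌉}e_k` then the
dual lattice function is `Λ^♯(r) = ⊕_k 𝔭^{⌈r−λ_k⌉}e_{-k}` in the dual basis;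
consequently duality is affine on barycenters. -/
theorem dual_lattice_function_split_formula_and_affine
    (E : Type*) [Field E]
    (V₁ V₂ : Type*) [AddCommGroup V₁] [Module E V₁] [AddCommGroup V₂] [Module E V₂]
    (vE : E → EReal)
    (hvE0 : ∀ x : E, vE x = ⊤ ↔ x = 0)
    (hvEmul : ∀ x y : E, vE (x * y) = vE x + vE y)
    (hvEadd : ∀ x y : E, min (vE x) (vE y) ≤ vE (x + y))
    (hvEdisc : ∀ x : E, x ≠ 0 → ∃ m : ℤ, vE x = ((m : ℝ) : EReal))
    (σE : E ≃+* E) (hσEinv : ∀ x, σE (σE x) = x)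
    (hvEσ : ∀ x : E, vE (σE x) = vE x)
    -- the non-degenerate pairing between `V₂` and `V₁`
    (hE : V₂ → V₁ → E)
    (haddl : ∀ x y z, hE (x + y) z = hE x z + hE y z)
    (haddr : ∀ x y z, hE x (y + z) = hE x y + hE x z)
    (hsesq : ∀ (a b : E) (x : V₂) (y : V₁), hE (a • x) (b • y) = σE a * b * hE x y)
    (hnondegl : ∀ x : V₂, (∀ y, hE x y = 0) → x = 0)
    (hnondegr : ∀ y : V₁, (∀ x, hE x y = 0) → y = 0)
    -- dual bases
    (n : ℕ) (e₁ : Module.Basis (Fin n) E V₁) (e₂ : Module.Basis (Fin n) E V₂)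
    (hdual : ∀ k l, hE (e₂ k) (e₁ l) = if k = l then 1 else 0)
    (c : Fin n → ℝ) :
    -- formula (7.2) ...
    ((fun r : ℝ => {x : V₂ | ∀ y : V₁,
        y ∈ ⋃ t ∈ Set.Ioi (-r), splitLat vE (⇑e₁) c t → 1 ≤ vE (hE x y)})
      = splitLat vE (⇑e₂) (fun k => -c k)) ∧
    -- ... and affineness of the duality
    (∀ (d : Fin n → ℝ) (t : ℝ), t ∈ Set.Icc (0 : ℝ) 1 →
      (fun r : ℝ => {x : V₂ | ∀ y : V₁,
          y ∈ ⋃ s ∈ Set.Ioi (-r),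
            splitLat vE (⇑e₁) (fun k => t * c k + (1 - t) * d k) s → 1 ≤ vE (hE x y)})
        = splitLat vE (⇑e₂) (fun k => t * (-c k) + (1 - t) * (-d k))) := by

  classical
  -- basic facts about the valuation
  have vE1 : vE 1 = 0 := by
    obtain ⟨m, hm⟩ := hvEdisc 1 one_ne_zero
    have h := hvEmul 1 1
    rw [one_mul, hm] at h
    have hm0 : (m : ℝ) = (m : ℝ) + (m : ℝ) := by exact_mod_cast h
    have : (m : ℝ) = 0 := by linarith
    rw [hm, this]; norm_num
  have h0l : ∀ y, hE 0 y = 0 := by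
    intro y
    have h := haddl 0 0 y
    rw [add_zero] at h
    exact (add_left_cancel (a := hE 0 y) (by rw [add_zero, ← h])).symm
  have hsum_l : ∀ (s : Finset (Fin n)) (f : Fin n → V₂) (y : V₁),
      hE (∑ l ∈ s, f l) y = ∑ l ∈ s, hE (f l) y := by
    intro s f y
    exact map_sum (AddMonoidHom.mk' (fun x => hE x y) (fun a b => haddl a b y)) f s
  have hsum_r : ∀ (s : Finset (Fin n)) (x : V₂) (f : Fin n → V₁),
      hE x (∑ l ∈ s, f l) = ∑ l ∈ s, hE x (f l) := by
    intro s x f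
    exact map_sum (AddMonoidHom.mk' (fun y => hE x y) (fun a b => haddr x a b)) f s
  -- lower bound on valuation of a finite sum
  have sumbound : ∀ (s : Finset (Fin n)) (f : Fin n → E),
      (∀ i ∈ s, (1 : EReal) ≤ vE (f i)) → (1 : EReal) ≤ vE (∑ i ∈ s, f i) := by
    intro s
    induction s using Finset.cons_induction with
    | empty => intro f _; simp [(hvE0 0).mpr rfl]
    | cons i s hi ih =>
        intro f hf
        rw [Finset.sum_cons]
        refine le_trans (le_min (hf i (Finset.mem_cons_self i s)) ?_) (hvEadd _ _)
        exact ih f (fun j hj => hf j (Finset.mem_cons_of_mem hj))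
  -- the main formula, for an arbitrary family of exponents
  have main : ∀ c' : Fin n → ℝ,
      (fun r : ℝ => {x : V₂ | ∀ y : V₁,
        y ∈ ⋃ t ∈ Set.Ioi (-r), splitLat vE (⇑e₁) c' t → 1 ≤ vE (hE x y)})
      = splitLat vE (⇑e₂) (fun k => -c' k) := by
    intro c'
    funext r
    ext x
    constructor
    · intro hx
      refine ⟨fun l => e₂.repr x l, ?_, (e₂.sum_repr x).symm⟩
      intro k
      show ((⌈r + -c' k⌉ : ℝ) : EReal) ≤ vE (e₂.repr x k)
      by_cases hb : e₂.repr x k = 0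
      · rw [hb, (hvE0 0).mpr rfl]; exact le_top
      · obtain ⟨m, hm⟩ := hvEdisc _ hb
        rw [hm]
        by_contra hlt
        push_neg at hlt
        have hlt' : (m : ℝ) < (⌈r + -c' k⌉ : ℝ) := by exact_mod_cast hlt
        have hmZ : m < ⌈r + -c' k⌉ := by exact_mod_cast hlt'
        have hmZ' : (m : ℝ) ≤ (⌈r + -c' k⌉ : ℝ) - 1 := by
          have : m ≤ ⌈r + -c' k⌉ - 1 := by omega
          push_cast
          exact_mod_cast this
        have hmr : (m : ℝ) < r - c' k := by
          have := Int.ceil_lt_add_one (r + -c' k)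
          linarith
        -- valuation of the inverse
        have hbinv : (e₂.repr x k)⁻¹ ≠ 0 := inv_ne_zero hb
        obtain ⟨m', hm'⟩ := hvEdisc _ hbinv
        have hmm' : (m' : ℝ) = -(m : ℝ) := by
          have h := hvEmul (e₂.repr x k) (e₂.repr x k)⁻¹
          rw [mul_inv_cancel₀ hb, vE1, hm, hm'] at h
          have : (0 : ℝ) = (m : ℝ) + (m' : ℝ) := by exact_mod_cast h
          linarith
        set a : E := σE ((e₂.repr x k)⁻¹) with ha
        have hva : vE a = ((m' : ℝ) : EReal) := by rw [ha, hvEσ, hm']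
        set s : ℝ := -(m : ℝ) - c' k with hs
        have hsmem : s ∈ Set.Ioi (-r) := by
          simp only [Set.mem_Ioi, hs]; linarith
        have hymem : (a • e₁ k) ∈ ⋃ t ∈ Set.Ioi (-r), splitLat vE (⇑e₁) c' t := by
          refine Set.mem_iUnion₂.mpr ⟨s, hsmem, ?_⟩
          refine ⟨fun l => if l = k then a else 0, ?_, ?_⟩
          · intro l
            show ((⌈s + c' l⌉ : ℝ) : EReal) ≤ vE (if l = k then a else 0)
            by_cases hlk : l = k
            · subst hlk
              rw [if_pos rfl, hva]
              have hceq : ⌈s + c' l⌉ = -m := by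
                rw [hs]; rw [show -(m : ℝ) - c' l + c' l = ((-m : ℤ) : ℝ) by push_cast; ring]
                exact Int.ceil_intCast _
              have hcl : (⌈s + c' l⌉ : ℝ) ≤ (m' : ℝ) := by
                rw [hceq]; push_cast; linarith [hmm']
              exact EReal.coe_le_coe_iff.mpr hcl
            · simp only [if_neg hlk, (hvE0 0).mpr rfl]; exact le_top
          · simp [ite_smul]
        have hcontr := hx _ hymem
        -- compute hE x (a • e₁ k)
        have hcomp : hE x (a • e₁ k) = 1 := by
          conv_lhs => rw [← e₂.sum_repr x]
          rw [hsum_l]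
          have : ∀ l, hE (e₂.repr x l • e₂ l) (a • e₁ k)
              = σE (e₂.repr x l) * a * (if l = k then 1 else 0) := by
            intro l; rw [hsesq, hdual]
          simp only [this, mul_ite, mul_one, mul_zero, Finset.sum_ite_eq',
            Finset.mem_univ, if_pos]
          rw [ha, ← map_mul, mul_inv_cancel₀ hb, map_one]
        rw [hcomp, vE1] at hcontr
        exact absurd hcontr (by norm_num)
    · rintro ⟨b, hb, rfl⟩ y hy
      rw [Set.mem_iUnion₂] at hy
      obtain ⟨s, hs, a, ha, rfl⟩ := hy
      rw [Set.mem_Ioi] at hs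
      have hcomp : hE (∑ k, b k • e₂ k) (∑ k, a k • e₁ k)
          = ∑ l, σE (b l) * a l := by
        rw [hsum_l]
        have : ∀ l, hE (b l • e₂ l) (∑ k, a k • e₁ k)
            = ∑ k, σE (b l) * a k * (if l = k then 1 else 0) := by
          intro l
          rw [hsum_r]
          exact Finset.sum_congr rfl (fun k _ => by rw [hsesq, hdual])
        simp only [this, mul_ite, mul_one, mul_zero, Finset.sum_ite_eq,
          Finset.mem_univ, if_pos]
      simp only [Set.mem_setOf_eq, hcomp]
      refine sumbound _ _ (fun l _ => ?_)
      rw [hvEmul, hvEσ]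
      have hterm : ((⌈r + -c' l⌉ : ℝ) : EReal) + ((⌈s + c' l⌉ : ℝ) : EReal)
          ≤ vE (b l) + vE (a l) := add_le_add (hb l) (ha l)
      refine le_trans ?_ hterm
      rw [← EReal.coe_add]
      have hZ : (1 : ℤ) ≤ ⌈r + -c' l⌉ + ⌈s + c' l⌉ := by
        have h1 : r + -c' l ≤ (⌈r + -c' l⌉ : ℝ) := Int.le_ceil _
        have h2 : s + c' l ≤ (⌈s + c' l⌉ : ℝ) := Int.le_ceil _
        have : (0 : ℝ) < (⌈r + -c' l⌉ : ℝ) + (⌈s + c' l⌉ : ℝ) := by linarith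
        have h0 : (0 : ℤ) < ⌈r + -c' l⌉ + ⌈s + c' l⌉ := by exact_mod_cast this
        omega
      have : (1 : ℝ) ≤ (⌈r + -c' l⌉ : ℝ) + (⌈s + c' l⌉ : ℝ) := by exact_mod_cast hZ
      exact_mod_cast EReal.coe_le_coe_iff.mpr this
  refine ⟨main c, ?_⟩
  intro d t _
  have h := main (fun k => t * c k + (1 - t) * d k)
  have hfun : (fun k => t * (-c k) + (1 - t) * (-d k))
      = (fun k => -(t * c k + (1 - t) * d k)) := by funext k; ring
  rw [hfun]
  exact h
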